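/- Let (𝓔ₙ⁰)_{n∈ℕ} satisfy hypotheses A₁ and A₃ with 𝓖(𝓔₀⁰) edgeless, let (Mₙ)_{n≥1} satisfy hypotheses B₁, B₂ and B₃, let Ψ = lim Ψₙ and K = ⋂ₙ Eₙ⁰. Then for every x ∈ M the following are equivalent: (i) the point Ψ(x) belongs to the orbit ⋃_{i∈ℤ} R^i(K); (ii) for every n large enough, Ψₙ(x) ∈ Eₙⁿ. -/

import Mathlib

open Set Function MeasureTheory Topology Filter

noncomputable section

variable {M : Type*}

section Defs
variable [TopologicalSpace M]

/-- A rectangle of `M`: a subset homeomorphic to the closed unit ball of `ℝ^d`. -/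
def IsRectangle (d : ℕ) (X : Set M) : Prop :=
  Nonempty (X ≃ₜ (Metric.closedBall (0 : EuclideanSpace ℝ (Fin d)) 1 :
    Set (EuclideanSpace ℝ (Fin d))))

/-- A collection of rectangles: a finite family of pairwise disjoint rectangles. -/
def IsRectCollection (d : ℕ) (𝓔 : Set (Set M)) : Prop :=
  𝓔.Finite ∧ (∀ X ∈ 𝓔, IsRectangle d X) ∧ 𝓔.Pairwise Disjoint

/-- The union `E` of the rectangles of a collection `𝓔`. -/
def collUnion (𝓔 : Set (Set M)) : Set M := ⋃₀ 𝓔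

/-- The collection `𝓔ⁿ = ⋃_{|k| ≤ n} R^k(𝓔)`. -/
def iterColl (R : M ≃ₜ M) (𝓔 : Set (Set M)) (n : ℕ) : Set (Set M) :=
  {Y | ∃ k : ℤ, |k| ≤ (n : ℤ) ∧ ∃ X ∈ 𝓔, Y = (R.toEquiv ^ k) '' X}

/-- `𝓔` is `p` times iterable. -/
def IterableColl (R : M ≃ₜ M) (𝓔 : Set (Set M)) (p : ℕ) : Prop :=
  ∀ X ∈ 𝓔, ∀ X' ∈ 𝓔, ∀ k l : ℤ, |k| ≤ (p : ℤ) → |l| ≤ (p : ℤ) →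
    Disjoint ((R.toEquiv ^ k) '' X) ((R.toEquiv ^ l) '' X') ∨
      (R.toEquiv ^ k) '' X = (R.toEquiv ^ l) '' X'

/-- The oriented graph `𝓖(𝓔)` (vertices the elements of `𝓔`, an edge from `X` to `R(X)`)
has no cycle. -/
def HasNoCycle (R : M ≃ₜ M) (𝓔 : Set (Set M)) : Prop :=
  ¬ ∃ (X : Set M) (p : ℕ), X ∈ 𝓔 ∧ 1 ≤ p ∧
      (∀ i : ℕ, i ≤ p → (R.toEquiv ^ (i : ℤ)) '' X ∈ 𝓔) ∧ (R.toEquiv ^ (p : ℤ)) '' X = X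

/-- The oriented graph `𝓖(𝓔)` has no edge. -/
def EdgelessGraph (R : M ≃ₜ M) (𝓔 : Set (Set M)) : Prop :=
  ∀ X ∈ 𝓔, (R : M → M) '' X ∉ 𝓔

/-- `𝓕` refines `𝓔`. -/
def Refines (𝓕 𝓔 : Set (Set M)) : Prop :=
  (∀ X ∈ 𝓔, ∃ Y ∈ 𝓕, Y ⊆ X) ∧
    ∀ X ∈ 𝓔, ∀ Y ∈ 𝓕, Disjoint X Y ∨ Y ⊆ interior X

/-- `𝓕` is compatible with `𝓔` for `p` iterates. -/
def CompatibleFor (R : M ≃ₜ M) (𝓕 𝓔 : Set (Set M)) (p : ℕ) : Prop :=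
  collUnion 𝓕 ⊆ collUnion 𝓔 ∧
    ∀ k : ℤ, |k| ≤ 2 * (p : ℤ) + 1 →
      (R.toEquiv ^ k) '' collUnion 𝓕 ∩ collUnion 𝓔 ⊆ collUnion 𝓕

/-- Hypothesis A₁. -/
def HypA1 (R : M ≃ₜ M) (𝓔 : ℕ → Set (Set M)) : Prop :=
  (∀ n, IterableColl R (𝓔 n) (n + 1) ∧ HasNoCycle R (iterColl R (𝓔 n) n)) ∧
  (∀ m n, m < n → Refines (iterColl R (𝓔 n) (n + 1)) (iterColl R (𝓔 m) (m + 1))) ∧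
  (∀ n, CompatibleFor R (𝓔 (n + 1)) (𝓔 n) (n + 1))

/-- Hypothesis A₂ (no isolated point). -/
def HypA2 (𝓔 : ℕ → Set (Set M)) : Prop :=
  ∀ n, ∀ X ∈ 𝓔 n, ∃ Y ∈ 𝓔 (n + 1), ∃ Z ∈ 𝓔 (n + 1), Y ≠ Z ∧ Y ⊆ X ∧ Z ⊆ X

/-- The set `K = ⋂ₙ Eₙ⁰`. -/
def limitK (𝓔 : ℕ → Set (Set M)) : Set M := ⋂ n, collUnion (𝓔 n)

/-- `Ψₙ = Mₙ ∘ ⋯ ∘ M₁`, `Ψ₀ = id`. -/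
def Psi (Mseq : ℕ → M ≃ₜ M) : ℕ → M ≃ₜ M
  | 0 => Homeomorph.refl M
  | n + 1 => (Psi Mseq n).trans (Mseq (n + 1))

/-- `gₙ = Ψₙ⁻¹ ∘ R ∘ Ψₙ`. -/
def gSeq (R : M ≃ₜ M) (Mseq : ℕ → M ≃ₜ M) (n : ℕ) : M ≃ₜ M :=
  ((Psi Mseq n).trans R).trans (Psi Mseq n).symm

/-- The support of a homeomorphism. -/
def homeoSupport (f : M ≃ₜ M) : Set M := closure {x | f x ≠ x}

/-- Hypothesis B₁ (support). -/
def HypB1 (R : M ≃ₜ M) (𝓔 : ℕ → Set (Set M)) (Mseq : ℕ → M ≃ₜ M) : Prop :=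
  ∀ n : ℕ, homeoSupport (Mseq (n + 1)) ⊆ collUnion (iterColl R (𝓔 n) n)

/-- Hypothesis B₂ (commutation). -/
def HypB2 (R : M ≃ₜ M) (𝓔 : ℕ → Set (Set M)) (Mseq : ℕ → M ≃ₜ M) : Prop :=
  ∀ n : ℕ, ∀ X ∈ iterColl R (𝓔 n) n, (R : M → M) '' X ∈ iterColl R (𝓔 n) n →
    ∀ x ∈ X, Mseq (n + 1) (R x) = R (Mseq (n + 1) x)

end Defs

section MetricDefs
variable [MetricSpace M]

/-- Hypothesis A₃ (decay of the collections of rectangles). -/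
def HypA3 (R : M ≃ₜ M) (𝓔 : ℕ → Set (Set M)) : Prop :=
  ∀ ε : ℝ, 0 < ε → ∃ N : ℕ, ∀ n ≥ N, ∀ X ∈ iterColl R (𝓔 n) n, Metric.diam X ≤ ε

/-- Hypothesis B₃ (convergence). -/
def HypB3 (R : M ≃ₜ M) (𝓔 : ℕ → Set (Set M)) (Mseq : ℕ → M ≃ₜ M) : Prop :=
  ∀ ε : ℝ, 0 < ε → ∃ N : ℕ, ∀ n ≥ N,
    ∀ X ∈ iterColl R (𝓔 (n + 1)) (n + 2) \ iterColl R (𝓔 (n + 1)) n,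
      Metric.diam ((Psi Mseq n) ⁻¹' X) ≤ ε

/-- Hypothesis B₄ (fibres are thin): the internal radius of `Ψₙ⁻¹(Eₙ⁰)` tends to `0`. -/
def HypB4 (𝓔 : ℕ → Set (Set M)) (Mseq : ℕ → M ≃ₜ M) : Prop :=
  ∀ ε : ℝ, 0 < ε → ∃ N : ℕ, ∀ n ≥ N, ∀ (x : M) (r : ℝ),
    Metric.ball x r ⊆ (Psi Mseq n) ⁻¹' collUnion (𝓔 n) → r ≤ ε

end MetricDefs

section TopDefs
variable [TopologicalSpace M]

/-- A Cantor set in `M`. -/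
def IsCantorSet (K : Set M) : Prop :=
  K.Nonempty ∧ IsCompact K ∧ Perfect K ∧ IsTotallyDisconnected K

/-- A totally disconnected compact set is tamely embedded if it admits arbitrarily small
neighbourhoods that are finite unions of pairwise disjoint rectangles. -/
def TamelyEmbedded (d : ℕ) (Q : Set M) : Prop :=
  ∀ U : Set M, IsOpen U → Q ⊆ U →
    ∃ 𝓑 : Set (Set M), IsRectCollection d 𝓑 ∧ Q ⊆ interior (collUnion 𝓑) ∧ collUnion 𝓑 ⊆ U

/-- A Cantor set is dynamically coherent for `R`. -/
def DynamicallyCoherent (R : M ≃ₜ M) (K : Set M) : Prop :=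
  (∀ k : ℤ, ∃ U : Set M, IsOpen U ∧ (R.toEquiv ^ k) '' K ∩ K = U ∩ K) ∧
  ∀ p : ℕ, ∀ x ∈ K,
    (∃ k : ℕ, 1 ≤ k ∧ ∀ i : ℕ, k ≤ i → i ≤ k + p → (R.toEquiv ^ (i : ℤ)) x ∉ K) ∧
    (∃ l : ℕ, 1 ≤ l ∧ ∀ i : ℕ, l ≤ i → i ≤ l + p → (R.toEquiv ^ (-(i : ℤ))) x ∉ K)

/-- A Cantor set is dynamically meagre for `R`: it has empty interior in
`Λ = Cl(⋃ᵢ Rⁱ(K))`. -/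
def DynamicallyMeagre (R : M ≃ₜ M) (K : Set M) : Prop :=
  ∀ U : Set M, IsOpen U → U ∩ closure (⋃ i : ℤ, (R.toEquiv ^ i) '' K) ⊆ K →
    U ∩ closure (⋃ i : ℤ, (R.toEquiv ^ i) '' K) = ∅

/-- `R` is minimal on the invariant set `Λ` (every orbit of a point of `Λ` is dense in `Λ`). -/
def MinimalOnSet (R : M ≃ₜ M) (Λ : Set M) : Prop :=
  ∀ x ∈ Λ, Λ ⊆ closure (Set.range fun n : ℤ => (R.toEquiv ^ n) x)

/-- `R` is transitive on the invariant set `Λ` (some orbit is dense in `Λ`). -/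
def TransitiveOnSet (R : M ≃ₜ M) (Λ : Set M) : Prop :=
  ∃ x ∈ Λ, Λ ⊆ closure (Set.range fun n : ℤ => (R.toEquiv ^ n) x)

end TopDefs

/-- The support of a measure. -/
def measSupport {M : Type*} [TopologicalSpace M] [MeasurableSpace M] (μ : Measure M) : Set M :=
  {x | ∀ U : Set M, IsOpen U → x ∈ U → 0 < μ U}

/-- The measurable dynamical system `S` restricted to the `S`-invariant set `A` is isomorphic
to the system `T` restricted to the `T`-invariant set `B`, in the sense of Béguin–Crovisier–Le
Roux: there are full invariant subsets `X₀ ⊆ A`, `Y₀ ⊆ B` and a bijective bimeasurable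
conjugacy between them. -/
def MeasIsoOn {X Y : Type*} [MeasurableSpace X] [MeasurableSpace Y]
    (S : X → X) (A : Set X) (T : Y → Y) (B : Set Y) : Prop :=
  ∃ (X₀ : Set X) (Y₀ : Set Y) (Θ : X → Y),
    X₀ ⊆ A ∧ Y₀ ⊆ B ∧ MeasurableSet X₀ ∧ MeasurableSet Y₀ ∧
    S '' X₀ = X₀ ∧ T '' Y₀ = Y₀ ∧
    (∀ μ : Measure X, IsProbabilityMeasure μ → Measure.map S μ = μ → μ A = 1 → μ X₀ = 1) ∧
    (∀ ν : Measure Y, IsProbabilityMeasure ν → Measure.map T ν = ν → ν B = 1 → ν Y₀ = 1) ∧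
    Set.BijOn Θ X₀ Y₀ ∧
    (∀ V : Set Y, MeasurableSet V → MeasurableSet (X₀ ∩ Θ ⁻¹' V)) ∧
    (∀ U : Set X, MeasurableSet U → MeasurableSet (Θ '' (X₀ ∩ U))) ∧
    (∀ x ∈ X₀, Θ (S x) = T (Θ x))

/-!
For `n` large, the rectangles of `𝓔ₙⁿ` are small, hence lie in charts, hence have nonempty
frontier (a nonempty compact open subset of `ℝ^d`, `d ≥ 1`, does not exist). A homeomorphism
supported in a finite disjoint union of closed sets fixes the frontier of each connected one
pointwise, so it maps that piece into itself. By B₁ this applies to `Mₙ₊₁` and `Eₙⁿ`; since the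
rectangles of later collections are contained in or disjoint from those of earlier ones, whether
`Ψₘ(x)` lies in a given rectangle of `𝓔ₙⁿ` does not depend on `m ≥ n`. Both implications then
follow by passing to the limit `Ψ(x) = lim Ψₘ(x)`: an interior point of a rectangle of `𝓔ₙⁿ` is
eventually reached, and the rectangles are closed. Compatibility of the collections turns
`Ψ(x) ∈ Eₘᵐ` for all large `m` into membership in the orbit of `K`. In dimension `0` the space
is finite, so `R` has finite order and the absence of cycles forces all collections to be empty.
-/

open Metric

namespace Homeomorph

variable {X : Type*} [TopologicalSpace X]

def toPerm : (X ≃ₜ X) →* Equiv.Perm X where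
  toFun := Homeomorph.toEquiv
  map_one' := rfl
  map_mul' _ _ := rfl

lemma coe_toEquiv_zpow (R : X ≃ₜ X) (k : ℤ) : ⇑(R.toEquiv ^ k) = ⇑(R ^ k) :=
  congrArg DFunLike.coe (map_zpow toPerm R k).symm

end Homeomorph

lemma apply_mem_iff_of_mapsTo {X : Type*} {g : X → X} {𝓕 : Set (Set X)} {S : Set X}
    (hmaps : ∀ Y ∈ 𝓕, MapsTo g Y Y) (hfix : ∀ z ∉ ⋃₀ 𝓕, g z = z)
    (hS : ∀ Y ∈ 𝓕, Disjoint S Y ∨ Y ⊆ S) (z : X) : g z ∈ S ↔ z ∈ S := by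
  by_cases hz : z ∈ ⋃₀ 𝓕
  · obtain ⟨Y, hY, hzY⟩ := hz
    rcases hS Y hY with h | h
    · exact iff_of_false (disjoint_right.mp h (hmaps Y hY hzY)) (disjoint_right.mp h hzY)
    · exact iff_of_true (h (hmaps Y hY hzY)) (h hzY)
  · rw [hfix z hz]

section Support

variable {X : Type*} [TopologicalSpace X]

lemma apply_eq_self_of_notMem_homeoSupport {f : X ≃ₜ X} {x : X} (hx : x ∉ homeoSupport f) :
    f x = x :=
  not_not.mp fun h => hx (subset_closure h)

lemma mapsTo_of_homeoSupport_subset {f : X ≃ₜ X} {S : Set X} (hf : homeoSupport f ⊆ S) :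
    MapsTo f S S := by
  intro x hx
  by_contra hfx
  have hfix : f (f x) = f x := apply_eq_self_of_notMem_homeoSupport fun h => hfx (hf h)
  exact hfx (by rwa [f.injective hfix])

/-- A point of `frontier Y` is not interior to `Y ∪ B`, so `g` fixes it; the connected set
`g '' Y` then meets `Y` and cannot lie in `B`. -/
lemma mapsTo_of_homeoSupport_subset_union [T2Space X] {g : X ≃ₜ X} {Y B : Set X}
    (hY : IsClosed Y) (hB : IsClosed B) (hYB : Disjoint Y B) (hconn : IsPreconnected Y)
    (hfr : (frontier Y).Nonempty) (hg : homeoSupport g ⊆ Y ∪ B) : MapsTo g Y Y := by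
  obtain ⟨a, ha⟩ := hfr
  have haY : a ∈ Y := hY.frontier_subset ha
  have haB : a ∉ B := disjoint_left.mp hYB haY
  have hfix : g a = a := by
    by_contra hga
    have hmoved : IsOpen {x | g x ≠ x} := isOpen_ne_fun g.continuous continuous_id
    have hsub : {x | g x ≠ x} ∩ Bᶜ ⊆ Y := fun x ⟨hx, hxB⟩ =>
      (hg (subset_closure hx)).resolve_right hxB
    exact ha.2 (interior_maximal hsub (hmoved.inter hB.isOpen_compl) ⟨hga, haB⟩)
  have himage : g '' Y ⊆ Y ∪ B :=
    ((mapsTo_of_homeoSupport_subset hg).mono_left subset_union_left).image_subset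
  have hinter : g '' Y ∩ (Y ∩ B) = ∅ := by simp [hYB.inter_eq]
  rcases isPreconnected_iff_subset_of_disjoint_closed.mp (hconn.image g g.continuous.continuousOn)
      Y B hY hB himage hinter with h | h
  · exact image_subset_iff.mp h
  · exact absurd (h ⟨a, haY, hfix⟩) haB

lemma mapsTo_of_homeoSupport_subset_sUnion [T2Space X] {g : X ≃ₜ X} {𝓕 : Set (Set X)}
    (hfin : 𝓕.Finite) (hclosed : ∀ W ∈ 𝓕, IsClosed W) (hdisj : 𝓕.PairwiseDisjoint id)
    (hg : homeoSupport g ⊆ ⋃₀ 𝓕) {Y : Set X} (hY : Y ∈ 𝓕) (hconn : IsPreconnected Y)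
    (hfr : (frontier Y).Nonempty) : MapsTo g Y Y := by
  refine mapsTo_of_homeoSupport_subset_union (B := ⋃₀ (𝓕 \ {Y})) (hclosed Y hY) ?_ ?_ hconn hfr ?_
  · rw [sUnion_eq_biUnion]
    exact hfin.sdiff.isClosed_biUnion fun W hW => hclosed W hW.1
  · exact disjoint_sUnion_right.mpr fun W hW => hdisj hY hW.1 (Ne.symm hW.2)
  · rw [← sUnion_insert, insert_sdiff_singleton, insert_eq_of_mem hY]
    exact hg

end Support

lemma IsCompact.frontier_nonempty_of_subset_source {X H : Type*} [TopologicalSpace X]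
    [TopologicalSpace H] [T2Space H] [PreconnectedSpace H] [NoncompactSpace H] {Y : Set X} (hY : IsCompact Y) (hne : Y.Nonempty)
    {e : OpenPartialHomeomorph X H} (hsub : Y ⊆ e.source) : (frontier Y).Nonempty := by
  rw [nonempty_iff_ne_empty, ne_eq, ← isClopen_iff_frontier_eq_empty]
  intro hclopen
  have himage : IsCompact (e '' Y) := hY.image_of_continuousOn (e.continuousOn.mono hsub)
  have hopen : IsOpen (e '' Y) := e.isOpen_image_of_subset_source hclopen.2 hsub
  exact himage.ne_univ (IsClopen.eq_univ ⟨himage.isClosed, hopen⟩ (hne.image e))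

lemma exists_pos_forall_diam_le_subset_chart_source {X H : Type*} [MetricSpace X]
    [CompactSpace X] [TopologicalSpace H] [ChartedSpace H X] :
    ∃ δ > 0, ∀ Y : Set X, Y.Nonempty → diam Y ≤ δ → ∃ x, Y ⊆ (chartAt H x).source := by
  obtain ⟨δ, hδ, hcover⟩ := lebesgue_number_lemma_of_metric isCompact_univ
    (fun x : X => (chartAt H x).open_source) fun x _ => mem_iUnion.mpr ⟨x, mem_chart_source H x⟩
  refine ⟨δ / 2, half_pos hδ, fun Y ⟨y, hy⟩ hdiam => ?_⟩
  obtain ⟨x, hx⟩ := hcover y (mem_univ y)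
  refine ⟨x, fun z hz => hx (mem_ball.mpr ?_)⟩
  calc dist z y ≤ diam Y := dist_le_diam_of_mem isBounded_of_compactSpace hz hy
    _ ≤ δ / 2 := hdiam
    _ < δ := half_lt_self hδ

section Rectangles

variable {X : Type*} [TopologicalSpace X] {d : ℕ}

lemma IsRectangle.image {Z : Type*} [TopologicalSpace Z] {Y : Set X} (hY : IsRectangle d Y)
    (h : X ≃ₜ Z) :
    IsRectangle d (h '' Y) :=
  let ⟨e⟩ := hY
  ⟨(h.image Y).symm.trans e⟩

lemma IsRectangle.isCompact {Y : Set X} (hY : IsRectangle d Y) : IsCompact Y := by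
  obtain ⟨e⟩ := hY
  exact isCompact_iff_compactSpace.mpr e.symm.compactSpace

lemma IsRectangle.isConnected {Y : Set X} (hY : IsRectangle d Y) : IsConnected Y := by
  obtain ⟨e⟩ := hY
  have : ConnectedSpace (closedBall (0 : EuclideanSpace ℝ (Fin d)) 1) :=
    isConnected_iff_connectedSpace.mp
      ((convex_closedBall _ _).isConnected (nonempty_closedBall.mpr zero_le_one))
  simpa using isConnected_range (continuous_subtype_val.comp e.symm.continuous)

lemma IsRectangle.zpow_image {Y : Set X} (hY : IsRectangle d Y) (R : X ≃ₜ X) (k : ℤ) :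
    IsRectangle d ((R.toEquiv ^ k) '' Y) := by
  rw [Homeomorph.coe_toEquiv_zpow]
  exact hY.image (R ^ k)

lemma IsRectCollection.isRectangle_of_mem_iterColl {R : X ≃ₜ X} {𝓔 : Set (Set X)}
    (h𝓔 : IsRectCollection d 𝓔) {n : ℕ} {Y : Set X} (hY : Y ∈ iterColl R 𝓔 n) :
    IsRectangle d Y := by
  obtain ⟨k, -, Z, hZ, rfl⟩ := hY
  exact (h𝓔.2.1 Z hZ).zpow_image R k

lemma IsRectCollection.isClosed_of_mem_iterColl [T2Space X] {R : X ≃ₜ X} {𝓔 : Set (Set X)}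
    (h𝓔 : IsRectCollection d 𝓔) {n : ℕ} {Y : Set X} (hY : Y ∈ iterColl R 𝓔 n) : IsClosed Y :=
  (h𝓔.isRectangle_of_mem_iterColl hY).isCompact.isClosed

end Rectangles

section Collections

variable {X : Type*} [TopologicalSpace X] {R : X ≃ₜ X}

lemma mem_iterColl_of_mem {𝓔 : Set (Set X)} {Y : Set X} (hY : Y ∈ 𝓔) (p : ℕ) :
    Y ∈ iterColl R 𝓔 p :=
  ⟨0, by simp, Y, hY, by simp⟩

lemma iterColl_mono (𝓔 : Set (Set X)) {p q : ℕ} (hpq : p ≤ q) :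
    iterColl R 𝓔 p ⊆ iterColl R 𝓔 q := by
  rintro Y ⟨k, hk, Z, hZ, rfl⟩
  exact ⟨k, hk.trans (by exact_mod_cast hpq), Z, hZ, rfl⟩

lemma Set.Finite.iterColl {𝓔 : Set (Set X)} (h𝓔 : 𝓔.Finite) (p : ℕ) :
    (iterColl R 𝓔 p).Finite := by
  refine (((finite_Icc (-(p : ℤ)) p).prod h𝓔).image
    fun kZ : ℤ × Set X => (R.toEquiv ^ kZ.1) '' kZ.2).subset ?_
  rintro Y ⟨k, hk, Z, hZ, rfl⟩
  exact ⟨(k, Z), ⟨mem_Icc.mpr (abs_le.mp hk), hZ⟩, rfl⟩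

lemma IterableColl.disjoint_or_eq {𝓔 : Set (Set X)} {p q : ℕ} (h𝓔 : IterableColl R 𝓔 p)
    (hqp : q ≤ p) {Y Y' : Set X} (hY : Y ∈ iterColl R 𝓔 q) (hY' : Y' ∈ iterColl R 𝓔 q) :
    Disjoint Y Y' ∨ Y = Y' := by
  obtain ⟨k, hk, Z, hZ, rfl⟩ := hY
  obtain ⟨l, hl, Z', hZ', rfl⟩ := hY'
  have hqp' : (q : ℤ) ≤ p := by exact_mod_cast hqp
  exact h𝓔 Z hZ Z' hZ' k l (hk.trans hqp') (hl.trans hqp')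

lemma IterableColl.pairwiseDisjoint_iterColl {𝓔 : Set (Set X)} {p q : ℕ}
    (h𝓔 : IterableColl R 𝓔 p) (hqp : q ≤ p) : (iterColl R 𝓔 q).PairwiseDisjoint id :=
  fun _ hY _ hY' hne => (h𝓔.disjoint_or_eq hqp hY hY').resolve_right hne

variable {𝓔 : ℕ → Set (Set X)}

lemma HypA1.disjoint_or_subset (hA1 : HypA1 R 𝓔) {n m : ℕ} (hnm : n ≤ m) {Y Y' : Set X}
    (hY : Y ∈ iterColl R (𝓔 n) n) (hY' : Y' ∈ iterColl R (𝓔 m) m) : Disjoint Y Y' ∨ Y' ⊆ Y := by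
  obtain hlt | rfl := hnm.lt_or_eq
  · exact ((hA1.2.1 n m hlt).2 Y (iterColl_mono _ n.le_succ hY) Y'
      (iterColl_mono _ m.le_succ hY')).imp_right (·.trans interior_subset)
  · exact ((hA1.1 n).1.disjoint_or_eq n.le_succ hY hY').imp_right (·.symm.subset)

lemma HypA1.collUnion_antitone (hA1 : HypA1 R 𝓔) : Antitone fun n => collUnion (𝓔 n) :=
  antitone_nat_of_succ_le fun n => (hA1.2.2 n).1

lemma HypA1.mem_interior_of_mem_limitK (hA1 : HypA1 R 𝓔) {y : X} (hy : y ∈ limitK 𝓔) {n : ℕ}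
    {Z : Set X} (hZ : Z ∈ 𝓔 n) (hyZ : y ∈ Z) : y ∈ interior Z := by
  obtain ⟨Z', hZ', hyZ'⟩ := mem_iInter.mp hy (n + 1)
  rcases (hA1.2.1 n (n + 1) n.lt_succ_self).2 Z (mem_iterColl_of_mem hZ _) Z'
    (mem_iterColl_of_mem hZ' _) with h | h
  · exact absurd hyZ' (disjoint_left.mp h hyZ)
  · exact h hyZ'

/-- The point `z` with `a = Rᵏ z` stays in `Eₜ⁰` for every `t`: if `z ∈ Eₜ⁰` and
`a = Rˡ w` with `w ∈ Eₜ₊₁⁰`, then `z = Rˡ⁻ᵏ w`, and compatibility for `t + 1` iterates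
covers `|l - k| ≤ 2t + 3`. -/
lemma HypA1.mem_orbit_limitK_of_eventually_mem (hA1 : HypA1 R 𝓔) {a : X} {N : ℕ}
    (ha : ∀ m ≥ N, a ∈ collUnion (iterColl R (𝓔 m) m)) :
    a ∈ ⋃ i : ℤ, (R.toEquiv ^ i) '' limitK 𝓔 := by
  obtain ⟨_, ⟨k, hk, Z, hZ, rfl⟩, z, hzZ, hza⟩ := ha N le_rfl
  have hz : ∀ t ≥ N, z ∈ collUnion (𝓔 t) := by
    intro t ht
    induction t, ht using Nat.le_induction with
    | base => exact ⟨Z, hZ, hzZ⟩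
    | succ t ht ih =>
      obtain ⟨_, ⟨l, hl, W, hW, rfl⟩, w, hwW, hwa⟩ := ha (t + 1) (by omega)
      have hzw : (R.toEquiv ^ (l - k)) w = z := by
        rw [sub_eq_neg_add, zpow_add, Equiv.Perm.mul_apply, hwa, ← hza, zpow_neg,
          ← Equiv.Perm.mul_apply, inv_mul_cancel, Equiv.Perm.one_apply]
      have hlk : |l - k| ≤ 2 * ((t + 1 : ℕ) : ℤ) + 1 := by
        have htN : (N : ℤ) ≤ t := by exact_mod_cast ht
        have hl' : |l| ≤ t + 1 := by exact_mod_cast hl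
        push_cast
        linarith [abs_sub l k]
      exact (hA1.2.2 t).2 (l - k) hlk ⟨⟨w, ⟨W, hW, hwW⟩, hzw⟩, ih⟩
  have hzK : z ∈ limitK 𝓔 := mem_iInter.mpr fun t =>
    (le_total N t).elim (hz t) fun htN => hA1.collUnion_antitone htN (hz N le_rfl)
  exact mem_iUnion.mpr ⟨k, z, hzK, hza⟩

/-- A rectangle of `𝓔ₘ`, refined into `𝓔ₙ` for large `n`, would run through a cycle
`Z, R Z, …, Rᵖ Z = Z` inside `𝓔ₙⁿ`. -/
lemma HypA1.eq_empty_of_pow_eq_one (hA1 : HypA1 R 𝓔) {p : ℕ} (hp : 0 < p)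
    (hRp : R.toEquiv ^ p = 1) (m : ℕ) : 𝓔 m = ∅ := by
  by_contra hm
  obtain ⟨Z₀, hZ₀⟩ := nonempty_iff_ne_empty.mpr hm
  set n := max (m + 1) p
  obtain ⟨_, ⟨k, -, Z, hZ, rfl⟩, -⟩ :=
    (hA1.2.1 m n (by omega)).1 Z₀ (mem_iterColl_of_mem hZ₀ (m + 1))
  refine (hA1.1 n).2 ⟨Z, p, mem_iterColl_of_mem hZ n, hp, fun i hi => ?_, ?_⟩
  · refine ⟨i, ?_, Z, hZ, rfl⟩
    rw [abs_of_nonneg (Int.natCast_nonneg i)]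
    exact_mod_cast hi.trans (le_max_right _ _)
  · simp [hRp]

end Collections

section Invariance

variable {X : Type*} [MetricSpace X] [CompactSpace X] {d : ℕ}
  [ChartedSpace (EuclideanSpace ℝ (Fin d)) X] {R : X ≃ₜ X} {𝓔 : ℕ → Set (Set X)}

lemma exists_forall_frontier_nonempty (hd : d ≠ 0) (hrect : ∀ n, IsRectCollection d (𝓔 n))
    (hA3 : HypA3 R 𝓔) : ∃ N, ∀ n ≥ N, ∀ Y ∈ iterColl R (𝓔 n) n, (frontier Y).Nonempty := by
  have : NeZero d := ⟨hd⟩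
  obtain ⟨δ, hδ, hchart⟩ :=
    exists_pos_forall_diam_le_subset_chart_source (X := X) (H := EuclideanSpace ℝ (Fin d))
  obtain ⟨N, hN⟩ := hA3 δ hδ
  refine ⟨N, fun n hn Y hY => ?_⟩
  have hrectY := (hrect n).isRectangle_of_mem_iterColl hY
  obtain ⟨x, hx⟩ := hchart Y hrectY.isConnected.nonempty (hN n hn Y hY)
  exact hrectY.isCompact.frontier_nonempty_of_subset_source hrectY.isConnected.nonempty hx

lemma exists_forall_mapsTo_iterColl (hd : d ≠ 0) (hrect : ∀ n, IsRectCollection d (𝓔 n))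
    (hA1 : HypA1 R 𝓔) (hA3 : HypA3 R 𝓔) {Mseq : ℕ → X ≃ₜ X} (hB1 : HypB1 R 𝓔 Mseq) :
    ∃ N, ∀ n ≥ N, ∀ Y ∈ iterColl R (𝓔 n) n, MapsTo (Mseq (n + 1)) Y Y := by
  obtain ⟨N, hN⟩ := exists_forall_frontier_nonempty hd hrect hA3
  refine ⟨N, fun n hn Y hY => ?_⟩
  exact mapsTo_of_homeoSupport_subset_sUnion ((hrect n).1.iterColl n)
    (fun W hW => (hrect n).isClosed_of_mem_iterColl hW)
    ((hA1.1 n).1.pairwiseDisjoint_iterColl n.le_succ) (hB1 n) hY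
    ((hrect n).isRectangle_of_mem_iterColl hY).isConnected.isPreconnected (hN n hn Y hY)

end Invariance

section Limit

variable {X : Type*} [TopologicalSpace X] {R : X ≃ₜ X} {𝓔 : ℕ → Set (Set X)}

lemma HypA1.psi_mem_iff (hA1 : HypA1 R 𝓔) {Mseq : ℕ → X ≃ₜ X} (hB1 : HypB1 R 𝓔 Mseq)
    {N : ℕ} (hmaps : ∀ s ≥ N, ∀ Y ∈ iterColl R (𝓔 s) s, MapsTo (Mseq (s + 1)) Y Y) {n : ℕ}
    (hn : N ≤ n) {Y : Set X} (hY : Y ∈ iterColl R (𝓔 n) n) (x : X) {m : ℕ} (hm : n ≤ m) :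
    Psi Mseq m x ∈ Y ↔ Psi Mseq n x ∈ Y := by
  induction m, hm using Nat.le_induction with
  | base => rfl
  | succ m hm ih =>
    rw [← ih]
    exact apply_mem_iff_of_mapsTo (hmaps m (hn.trans hm))
      (fun z hz => apply_eq_self_of_notMem_homeoSupport fun h => hz (hB1 m h))
      (fun Y' hY' => hA1.disjoint_or_subset hm hY hY') _

lemma HypA1.eventually_mem_of_mem_orbit_limitK (hA1 : HypA1 R 𝓔) {u : ℕ → X} {a : X}
    (hu : Tendsto u atTop (𝓝 a)) {N : ℕ}
    (htrack : ∀ n ≥ N, ∀ Y ∈ iterColl R (𝓔 n) n, ∀ m ≥ n, (u m ∈ Y ↔ u n ∈ Y))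
    (ha : a ∈ ⋃ i : ℤ, (R.toEquiv ^ i) '' limitK 𝓔) :
    ∃ N', ∀ n ≥ N', u n ∈ collUnion (iterColl R (𝓔 n) n) := by
  obtain ⟨i, y, hy, rfl⟩ := mem_iUnion.mp ha
  refine ⟨max N i.natAbs, fun n hn => ?_⟩
  obtain ⟨Z, hZ, hyZ⟩ := mem_iInter.mp hy n
  have hY : (R.toEquiv ^ i) '' Z ∈ iterColl R (𝓔 n) n :=
    ⟨i, by rw [Int.abs_eq_natAbs]; exact_mod_cast (le_max_right _ _).trans hn, Z, hZ, rfl⟩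
  have hint : (R.toEquiv ^ i) y ∈ interior ((R.toEquiv ^ i) '' Z) := by
    rw [Homeomorph.coe_toEquiv_zpow, ← Homeomorph.image_interior]
    exact mem_image_of_mem _ (hA1.mem_interior_of_mem_limitK hy hZ hyZ)
  obtain ⟨m, hmY, hnm⟩ :=
    ((hu.eventually (isOpen_interior.mem_nhds hint)).and (eventually_ge_atTop n)).exists
  exact ⟨_, hY, (htrack n ((le_max_left _ _).trans hn) _ hY m hnm).mp (interior_subset hmY)⟩

lemma HypA1.mem_orbit_limitK_of_eventually_mem_of_tendsto (hA1 : HypA1 R 𝓔) {u : ℕ → X}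
    {a : X} (hu : Tendsto u atTop (𝓝 a)) (hclosed : ∀ n, ∀ Y ∈ iterColl R (𝓔 n) n, IsClosed Y)
    {N : ℕ} (htrack : ∀ n ≥ N, ∀ Y ∈ iterColl R (𝓔 n) n, ∀ m ≥ n, (u m ∈ Y ↔ u n ∈ Y))
    (hu_mem : ∃ N', ∀ n ≥ N', u n ∈ collUnion (iterColl R (𝓔 n) n)) :
    a ∈ ⋃ i : ℤ, (R.toEquiv ^ i) '' limitK 𝓔 := by
  obtain ⟨N', hN'⟩ := hu_mem
  refine hA1.mem_orbit_limitK_of_eventually_mem (N := max N N') fun m hm => ?_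
  obtain ⟨Y, hY, hmY⟩ := hN' m ((le_max_right _ _).trans hm)
  refine ⟨Y, hY, (hclosed m Y hY).mem_of_tendsto hu (eventually_atTop.mpr ⟨m, fun t ht => ?_⟩)⟩
  exact (htrack m ((le_max_left _ _).trans hm) Y hY t ht).mpr hmY

end Limit

theorem mem_orbit_limitK_iff_general (d : ℕ) (M : Type*) [MetricSpace M] [CompactSpace M]
    [ChartedSpace (EuclideanSpace ℝ (Fin d)) M]
    (R : M ≃ₜ M) (𝓔 : ℕ → Set (Set M)) (hrect : ∀ n, IsRectCollection d (𝓔 n))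
    (hA1 : HypA1 R 𝓔) (hA3 : HypA3 R 𝓔)
    (Mseq : ℕ → M ≃ₜ M)
    (hB1 : HypB1 R 𝓔 Mseq)
    (Ψ : M → M)
    (hΨ : TendstoUniformly (fun n => ⇑(Psi Mseq n)) Ψ Filter.atTop) :
    ∀ x : M, Ψ x ∈ (⋃ i : ℤ, (R.toEquiv ^ i) '' limitK 𝓔) ↔
      ∃ N : ℕ, ∀ n ≥ N, Psi Mseq n x ∈ collUnion (iterColl R (𝓔 n) n) := by
  intro x
  rcases eq_or_ne d 0 with rfl | hd
  · have : DiscreteTopology M := ChartedSpace.discreteTopology (EuclideanSpace ℝ (Fin 0)) M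
    have : Finite M := finite_of_compact_of_discrete
    have hempty := hA1.eq_empty_of_pow_eq_one (orderOf_pos R.toEquiv) (pow_orderOf_eq_one _)
    simpa [limitK, collUnion, iterColl, hempty] using fun N => ⟨N, le_rfl⟩
  · obtain ⟨N, hmaps⟩ := exists_forall_mapsTo_iterColl hd hrect hA1 hA3 hB1
    have htrack : ∀ n ≥ N, ∀ Y ∈ iterColl R (𝓔 n) n, ∀ m ≥ n,
        (Psi Mseq m x ∈ Y ↔ Psi Mseq n x ∈ Y) :=
      fun n hn Y hY m hm => hA1.psi_mem_iff hB1 hmaps hn hY x hm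
    exact ⟨hA1.eventually_mem_of_mem_orbit_limitK (hΨ.tendsto_at x) htrack,
      hA1.mem_orbit_limitK_of_eventually_mem_of_tendsto (hΨ.tendsto_at x)
        (fun n _ hY => (hrect n).isClosed_of_mem_iterColl hY) htrack⟩

/-- A point `Ψ(x)` belongs to the orbit of `K` if and only if, for every
`n` large enough, `Ψₙ(x)` belongs to `Eₙⁿ`. -/
theorem mem_orbit_limitK_iff (d : ℕ) (M : Type*) [MetricSpace M] [CompactSpace M]
    [ChartedSpace (EuclideanSpace ℝ (Fin d)) M]
    (R : M ≃ₜ M) (𝓔 : ℕ → Set (Set M)) (hrect : ∀ n, IsRectCollection d (𝓔 n))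
    (hA1 : HypA1 R 𝓔) (hA3 : HypA3 R 𝓔) (hEdge : EdgelessGraph R (𝓔 0))
    (Mseq : ℕ → M ≃ₜ M)
    (hB1 : HypB1 R 𝓔 Mseq) (hB2 : HypB2 R 𝓔 Mseq) (hB3 : HypB3 R 𝓔 Mseq)
    (Ψ : M → M) (hΨc : Continuous Ψ)
    (hΨ : TendstoUniformly (fun n => ⇑(Psi Mseq n)) Ψ Filter.atTop) :
    ∀ x : M, Ψ x ∈ (⋃ i : ℤ, (R.toEquiv ^ i) '' limitK 𝓔) ↔
      ∃ N : ℕ, ∀ n ≥ N, Psi Mseq n x ∈ collUnion (iterColl R (𝓔 n) n) :=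
  mem_orbit_limitK_iff_general d M R 𝓔 hrect hA1 hA3 Mseq hB1 Ψ hΨ
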